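/- Let (u_n)_{n≥1} be regularly varying at infinity with index -γ, γ > 1, with u := ∑_{n≥1} u_n < 1, and define p_n := ∑_{k=1}^n (-1)^{k+1} u_n^{*(k)}. Then p_n / u_n → 1/(1+u)^2 as n → ∞. -/

import Mathlib

/-!
Egorov's theorem and a translation argument on `[0, 1]` upgrade regular variation to uniform
control of `log u n - log u m` on windows `m ≤ n ≤ 2 m`; hence `u (n - j) / u n → 1` for fixed `j`
and `u (n - j) ≤ C u n` for `2 j ≤ n`. Splitting a convolution at `n / 2`, dominated convergence
gives `(a * b)_n / u_n → β ∑ a + α ∑ b` whenever `a_n / u_n → α` and `b_n / u_n → β`, so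
`u^{*k}_n / u_n → k U^{k-1}` with `U = ∑ u`. Kesten's bound `u^{*k}_n ≤ B k r^k u_n` for a fixed
`U < r < 1` then justifies dominated convergence in `k`, and `∑ (-1)^{k+1} k U^{k-1} = 1/(1+U)^2`.
-/

/-- Convolution of sequences indexed by the positive integers:
`(a*b)(n) = ∑_{j=1}^{n-1} a(j) b(n-j)`. -/
noncomputable def conv (a b : ℕ → ℝ) (n : ℕ) : ℝ :=
  ∑ j ∈ Finset.Ico 1 n, a j * b (n - j)

/-- `iterConv a k = a^{*(k)}` for `k ≥ 1`: `a^{*(1)} = a` and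
`a^{*(k+1)} = a^{*(k)} * a`. -/
noncomputable def iterConv (a : ℕ → ℝ) : ℕ → ℕ → ℝ
  | 0, n => if n = 0 then 1 else 0
  | k + 1, n => if k = 0 then a n else conv (iterConv a k) a n

/-- A positive sequence `a` is regularly varying at infinity with index `ρ`
if `a ⌊l·n⌋ / a n → l ^ ρ` for every `l > 0`. -/
def RegVar (a : ℕ → ℝ) (ρ : ℝ) : Prop :=
  ∀ l : ℝ, 0 < l →
    Filter.Tendsto (fun n : ℕ => a ⌊l * (n : ℝ)⌋₊ / a n) Filter.atTop
      (nhds (l ^ ρ))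

open Filter Topology MeasureTheory Real Set

theorem exists_mem_Icc_notMem_and_add_notMem {S : Set ℝ} (hS : volume S < 2⁻¹) (s : ℝ) :
    ∃ t ∈ Icc (0 : ℝ) 1, t ∉ S ∧ t + s ∉ S := by
  by_contra! h
  have hcover : Icc (0 : ℝ) 1 ⊆ S ∪ (· + s) ⁻¹' S := fun t ht =>
    or_iff_not_imp_left.2 (h t ht)
  have hle := (measure_mono (μ := volume) hcover).trans (measure_union_le _ _)
  rw [measure_preimage_add_right, Real.volume_Icc, sub_zero, ENNReal.ofReal_one] at hle
  exact hle.not_gt (by simpa [ENNReal.inv_two_add_inv_two] using ENNReal.add_lt_add hS hS)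

theorem log_div_mem_Icc {m n : ℕ} (hm : 1 ≤ m) (hmn : m ≤ n) (hn : n ≤ 2 * m) :
    log ((n : ℝ) / m) ∈ Icc (0 : ℝ) 1 := by
  have hm' : (0 : ℝ) < m := by exact_mod_cast hm
  have hn' : (0 : ℝ) < n := by exact_mod_cast hm.trans hmn
  refine ⟨log_nonneg ((one_le_div hm').2 (by exact_mod_cast hmn)), ?_⟩
  calc log ((n : ℝ) / m) ≤ log 2 :=
        log_le_log (by positivity) ((div_le_iff₀ hm').2 (by exact_mod_cast hn))
    _ ≤ 1 := (log_two_lt_d9.trans (by norm_num)).le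

namespace RegVar

variable {u : ℕ → ℝ} {ρ : ℝ}

theorem tendsto_log_sub (hu : RegVar u ρ) (hpos : ∀ n, 1 ≤ n → 0 < u n) {t : ℝ} (ht : 0 ≤ t) :
    Tendsto (fun n : ℕ => log (u ⌊exp t * n⌋₊) - log (u n) - ρ * t) atTop (𝓝 0) := by
  have hlog : Tendsto (fun n : ℕ => log (u ⌊exp t * n⌋₊ / u n)) atTop (𝓝 (ρ * t)) := by
    have := (continuousAt_log (by positivity)).tendsto.comp (hu _ (exp_pos t))
    rwa [log_rpow (exp_pos t), log_exp] at this
  refine (hlog.sub_const (ρ * t)).congr' ?_ |>.trans (by rw [sub_self])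
  filter_upwards [eventually_ge_atTop 1] with n hn
  have hfloor : 1 ≤ ⌊exp t * n⌋₊ :=
    Nat.one_le_floor_iff _ |>.2 <|
      one_le_mul_of_one_le_of_one_le (one_le_exp ht) (by exact_mod_cast hn)
  rw [log_div (hpos _ hfloor).ne' (hpos n hn).ne']

theorem eventually_abs_log_sub_lt (hu : RegVar u ρ) (hpos : ∀ n, 1 ≤ n → 0 < u n) {δ : ℝ}
    (hδ : 0 < δ) : ∀ᶠ m in atTop, ∀ n : ℕ, m ≤ n → n ≤ 2 * m →
      |log (u n) - log (u m) - ρ * log ((n : ℝ) / m)| < δ := by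
  set f : ℕ → ℝ → ℝ := fun n t => log (u ⌊exp t * n⌋₊) - log (u n) - ρ * t
  have hmeas (n : ℕ) : StronglyMeasurable (f n) := by
    refine Measurable.stronglyMeasurable ?_
    fun_prop
  obtain ⟨S, -, -, hS, hunif⟩ := tendstoUniformlyOn_of_ae_tendsto (μ := volume) hmeas
    stronglyMeasurable_const measurableSet_Icc (by simp)
    (ae_of_all _ fun t ht => hu.tendsto_log_sub hpos ht.1) (by norm_num : (0 : ℝ) < 1 / 4)
  obtain ⟨N, hN⟩ :=
    eventually_atTop.1 (Metric.tendstoUniformlyOn_iff.1 hunif (δ / 2) (half_pos hδ))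
  filter_upwards [eventually_ge_atTop (max N 1)] with m hm n hmn hnm
  have hm1 : 1 ≤ m := le_of_max_le_right hm
  have hs := log_div_mem_Icc hm1 hmn hnm
  obtain ⟨t, ht, htS, htsS⟩ := exists_mem_Icc_notMem_and_add_notMem
    (hS.trans_lt (by rw [ENNReal.ofReal_lt_iff_lt_toReal] <;> norm_num)) (log ((n : ℝ) / m))
  -- `t` tests `n` and `t + log (n / m)` tests `m` at the same point `exp t * n`
  have hpoint : exp (t + log ((n : ℝ) / m)) * m = exp t * n := by
    have hm0 : (0 : ℝ) < m := by exact_mod_cast hm1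
    have hn0 : (0 : ℝ) < n := by exact_mod_cast hm1.trans hmn
    rw [exp_add, exp_log (div_pos hn0 hm0)]
    field_simp
  have hn := hN n (le_of_max_le_left (hm.trans hmn)) t ⟨⟨ht.1, ht.2.trans one_le_two⟩, htS⟩
  have hm' := hN m (le_of_max_le_left hm) _
    ⟨⟨add_nonneg ht.1 hs.1, by linarith [ht.2, hs.2]⟩, htsS⟩
  simp only [dist_zero_left, Real.norm_eq_abs, f, hpoint] at hn hm'
  calc |log (u n) - log (u m) - ρ * log ((n : ℝ) / m)|
      = |(log (u ⌊exp t * n⌋₊) - log (u m) - ρ * (t + log ((n : ℝ) / m)))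
          - (log (u ⌊exp t * n⌋₊) - log (u n) - ρ * t)| := by ring_nf
    _ ≤ _ := abs_sub _ _
    _ < δ := by linarith

theorem tendsto_sub_div (hu : RegVar u ρ) (hpos : ∀ n, 1 ≤ n → 0 < u n) (j : ℕ) :
    Tendsto (fun n => u (n - j) / u n) atTop (𝓝 1) := by
  have herr : Tendsto (fun n : ℕ => log (u n) - log (u (n - j)) - ρ * log ((n : ℝ) / (n - j : ℕ)))
      atTop (𝓝 0) := by
    refine Metric.tendsto_nhds.2 fun δ hδ => ?_
    filter_upwards [(tendsto_sub_atTop_nat j).eventually (hu.eventually_abs_log_sub_lt hpos hδ),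
      eventually_ge_atTop (2 * j)] with n hn hnj
    simpa using hn n (Nat.sub_le n j) (by omega)
  have hfrac : Tendsto (fun n : ℕ => (n : ℝ) / (n - j : ℕ)) atTop (𝓝 1) := by
    have : Tendsto (fun n : ℕ => (1 - (j : ℝ) / n)⁻¹) atTop (𝓝 1) := by
      simpa using ((tendsto_const_div_atTop_nhds_zero_nat (j : ℝ)).const_sub 1).inv₀ (by simp)
    refine this.congr' ?_
    filter_upwards [eventually_gt_atTop j] with n hn
    have : (0 : ℝ) < n := by exact_mod_cast (Nat.zero_le j).trans_lt hn
    rw [Nat.cast_sub hn.le]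
    field_simp
  have hlog : Tendsto (fun n => log (u (n - j)) - log (u n)) atTop (𝓝 0) := by
    have := (hfrac.log one_ne_zero).const_mul ρ |>.add herr
    simpa using this.neg
  refine ((continuous_exp.tendsto 0).comp hlog).congr' ?_ |>.trans (by rw [exp_zero])
  filter_upwards [eventually_gt_atTop j] with n hn
  rw [Function.comp_apply, exp_sub, exp_log (hpos _ (by omega)), exp_log (hpos _ (by omega))]

theorem exists_eventually_sub_le_mul (hu : RegVar u ρ) (hpos : ∀ n, 1 ≤ n → 0 < u n) :
    ∃ C, ∀ᶠ n in atTop, ∀ j, 2 * j ≤ n → u (n - j) ≤ C * u n := by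
  obtain ⟨N, hN⟩ := eventually_atTop.1 (hu.eventually_abs_log_sub_lt hpos one_pos)
  refine ⟨exp (1 + |ρ|), ?_⟩
  filter_upwards [eventually_ge_atTop (2 * N + 2)] with n hn j hj
  have hm : 1 ≤ n - j := by omega
  have hlog := (abs_lt.1 (hN (n - j) (by omega) n (Nat.sub_le n j) (by omega))).1
  have hs := log_div_mem_Icc hm (Nat.sub_le n j) (by omega)
  have hρ : -(ρ * log ((n : ℝ) / (n - j : ℕ))) ≤ |ρ| :=
    (neg_le_abs _).trans <| by
      rw [abs_mul, abs_of_nonneg hs.1]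
      exact mul_le_of_le_one_right (abs_nonneg ρ) hs.2
  calc u (n - j) = exp (log (u (n - j))) := (exp_log (hpos _ hm)).symm
    _ ≤ exp (1 + |ρ| + log (u n)) := exp_le_exp.2 (by linarith)
    _ = exp (1 + |ρ|) * u n := by rw [exp_add, exp_log (hpos n (by omega))]

end RegVar

theorem nonneg_of_zero_of_pos {u : ℕ → ℝ} (hu0 : u 0 = 0) (hpos : ∀ n, 1 ≤ n → 0 < u n)
    (n : ℕ) : 0 ≤ u n :=
  n.eq_zero_or_pos.elim (fun h => h ▸ hu0.ge) fun hn => (hpos n hn).le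

theorem conv_eq_sum_add_sum (a b : ℕ → ℝ) (n : ℕ) :
    conv a b n = ∑ j ∈ Finset.Ico 1 n with 2 * j ≤ n, a j * b (n - j)
      + ∑ j ∈ Finset.Ico 1 n with 2 * j < n, b j * a (n - j) := by
  rw [conv, ← Finset.sum_filter_add_sum_filter_not _ (fun j => 2 * j ≤ n)]
  congr 1
  refine Finset.sum_nbij' (n - ·) (n - ·) ?_ ?_ ?_ ?_ ?_ <;>
    simp only [Finset.mem_filter, Finset.mem_Ico] <;> intro j hj <;>
    first | omega | rw [Nat.sub_sub_self (by omega), mul_comm]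

theorem conv_eq_sum_antidiagonal {a b : ℕ → ℝ} (ha : a 0 = 0) (hb : b 0 = 0) (n : ℕ) :
    conv a b n = ∑ kl ∈ Finset.HasAntidiagonal.antidiagonal n, a kl.1 * b kl.2 := by
  rw [conv, Finset.Nat.sum_antidiagonal_eq_sum_range_succ_mk]
  refine Finset.sum_subset (fun j hj => by simp at hj ⊢; omega) fun j hj hj' => ?_
  obtain rfl | rfl : j = 0 ∨ j = n := by simp at hj hj'; omega
  · simp [ha]
  · simp [hb]

theorem hasSum_conv {a b : ℕ → ℝ} (ha : ∀ n, 0 ≤ a n) (hb : ∀ n, 0 ≤ b n) (ha0 : a 0 = 0)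
    (hb0 : b 0 = 0) (hsa : Summable a) (hsb : Summable b) :
    HasSum (conv a b) ((∑' n, a n) * ∑' n, b n) := by
  have hna : Summable (‖a ·‖) := hsa.congr fun n => (Real.norm_of_nonneg (ha n)).symm
  have hnb : Summable (‖b ·‖) := hsb.congr fun n => (Real.norm_of_nonneg (hb n)).symm
  simp_rw [funext (conv_eq_sum_antidiagonal ha0 hb0),
    tsum_mul_tsum_eq_tsum_sum_antidiagonal_of_summable_norm hna hnb]
  exact (summable_sum_mul_antidiagonal_of_summable_norm' hna hsa hnb hsb).hasSum

theorem iterConv_one (u : ℕ → ℝ) : iterConv u 1 = u := rfl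

theorem iterConv_succ (u : ℕ → ℝ) {k : ℕ} (hk : 1 ≤ k) :
    iterConv u (k + 1) = conv (iterConv u k) u := by
  obtain ⟨k, rfl⟩ := Nat.exists_eq_add_of_le' hk
  rfl

theorem iterConv_zero_of_one_le (u : ℕ → ℝ) {n : ℕ} (hn : 1 ≤ n) : iterConv u 0 n = 0 :=
  if_neg (by omega)

theorem iterConv_nonneg {u : ℕ → ℝ} (hu : ∀ n, 0 ≤ u n) (k n : ℕ) : 0 ≤ iterConv u k n := by
  induction k generalizing n with
  | zero => unfold iterConv; split_ifs <;> norm_num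
  | succ k ih =>
    rcases Nat.eq_zero_or_pos k with rfl | hk
    · exact hu n
    · rw [iterConv_succ u hk]
      exact Finset.sum_nonneg fun j _ => mul_nonneg (ih j) (hu _)

theorem iterConv_eq_zero_of_lt {u : ℕ → ℝ} (hu0 : u 0 = 0) {k n : ℕ} (hn : n < k) :
    iterConv u k n = 0 := by
  induction k generalizing n with
  | zero => omega
  | succ k ih =>
    rcases Nat.eq_zero_or_pos k with rfl | hk
    · rwa [Nat.lt_one_iff.1 hn]
    · rw [iterConv_succ u hk]
      exact Finset.sum_eq_zero fun j hj => by
        rw [ih (by simp at hj; omega), zero_mul]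

theorem hasSum_iterConv {u : ℕ → ℝ} (hu : ∀ n, 0 ≤ u n) (hu0 : u 0 = 0) (hsum : Summable u)
    (k : ℕ) : HasSum (iterConv u k) ((∑' n, u n) ^ k) := by
  induction k with
  | zero =>
    rw [pow_zero]
    convert hasSum_ite_eq 0 (1 : ℝ) using 1
    ext n
    simp [iterConv]
  | succ k ih =>
    rcases Nat.eq_zero_or_pos k with rfl | hk
    · simpa [iterConv_one] using hsum.hasSum
    · rw [iterConv_succ u hk, pow_succ, ← ih.tsum_eq]
      exact hasSum_conv (iterConv_nonneg hu k) hu (iterConv_eq_zero_of_lt hu0 hk) hu0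
        ih.summable hsum

theorem iterConv_le_pow {u : ℕ → ℝ} (hu : ∀ n, 0 ≤ u n) (hu0 : u 0 = 0) (hsum : Summable u)
    (k n : ℕ) : iterConv u k n ≤ (∑' n, u n) ^ k :=
  le_hasSum (hasSum_iterConv hu hu0 hsum k) n fun i _ => iterConv_nonneg hu k i

theorem exists_eventually_norm_sub_div_le {u b : ℕ → ℝ} {β : ℝ} (hpos : ∀ n, 1 ≤ n → 0 < u n)
    (hdom : ∃ C, ∀ᶠ n in atTop, ∀ j, 2 * j ≤ n → u (n - j) ≤ C * u n)
    (hb : Tendsto (fun n => b n / u n) atTop (𝓝 β)) :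
    ∃ K, 0 ≤ K ∧ ∀ᶠ n in atTop, ∀ j, 2 * j ≤ n → ‖b (n - j) / u n‖ ≤ K := by
  obtain ⟨C, hC⟩ := hdom
  obtain ⟨M, hM⟩ := eventually_atTop.1 <|
    (hb.norm.eventually (gt_mem_nhds (lt_add_one ‖β‖))).and (eventually_ge_atTop 1)
  refine ⟨(‖β‖ + 1) * |C|, by positivity, ?_⟩
  filter_upwards [hC, eventually_ge_atTop (2 * M)] with n hCn hn j hj
  obtain ⟨hbM, hm⟩ := hM (n - j) (by omega)
  have hun : 0 < u n := hpos n (by omega)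
  calc ‖b (n - j) / u n‖ = ‖b (n - j) / u (n - j)‖ * (u (n - j) / u n) := by
        rw [norm_div, norm_div, Real.norm_of_nonneg (hpos _ hm).le, Real.norm_of_nonneg hun.le,
          div_mul_div_cancel₀ (hpos _ hm).ne']
    _ ≤ (‖β‖ + 1) * |C| :=
        mul_le_mul hbM.le ((div_le_iff₀ hun).2 ((hCn j hj).trans (by gcongr; exact le_abs_self C)))
          (div_nonneg (hpos _ hm).le hun.le) (by positivity)

theorem tendsto_sum_mul_div {u a b : ℕ → ℝ} {β : ℝ} {s : ℕ → Finset ℕ}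
    (hpos : ∀ n, 1 ≤ n → 0 < u n)
    (hshift : ∀ j, Tendsto (fun n => u (n - j) / u n) atTop (𝓝 1))
    (hdom : ∃ C, ∀ᶠ n in atTop, ∀ j, 2 * j ≤ n → u (n - j) ≤ C * u n)
    (ha : ∀ n, 0 ≤ a n) (ha0 : a 0 = 0) (hsa : Summable a)
    (hb : Tendsto (fun n => b n / u n) atTop (𝓝 β))
    (hs : ∀ n, ∀ j ∈ s n, 2 * j ≤ n) (hs' : ∀ j, 1 ≤ j → ∀ᶠ n in atTop, j ∈ s n) :
    Tendsto (fun n => ∑ j ∈ s n, a j * b (n - j) / u n) atTop (𝓝 ((∑' j, a j) * β)) := by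
  obtain ⟨K, hK0, hK⟩ := exists_eventually_norm_sub_div_le hpos hdom hb
  simp_rw [fun n => sum_eq_tsum_indicator (fun j => a j * b (n - j) / u n) (s n)
    (.unconditional ℕ), ← tsum_mul_right]
  refine tendsto_tsum_of_dominated_convergence (bound := fun j => a j * K)
    (hsa.mul_right K) (fun j => ?_) ?_
  · rcases Nat.eq_zero_or_pos j with rfl | hj
    · simp [ha0, Set.indicator_apply]
    have hlim : Tendsto (fun n => a j * (b (n - j) / u (n - j) * (u (n - j) / u n))) atTop
        (𝓝 (a j * (β * 1))) :=
      ((hb.comp (tendsto_sub_atTop_nat j)).mul (hshift j)).const_mul _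
    rw [mul_one] at hlim
    refine hlim.congr' ?_
    filter_upwards [hs' j hj, eventually_gt_atTop j] with n hjn hnj
    rw [Set.indicator_of_mem (Finset.mem_coe.2 hjn),
      div_mul_div_cancel₀ (hpos _ (by omega)).ne', mul_div_assoc]
  · filter_upwards [hK] with n hKn j
    by_cases hjn : j ∈ s n
    · rw [Set.indicator_of_mem (Finset.mem_coe.2 hjn), mul_div_assoc, norm_mul,
        Real.norm_of_nonneg (ha j)]
      exact mul_le_mul_of_nonneg_left (hKn j (hs n j hjn)) (ha j)
    · rw [Set.indicator_of_notMem (by simpa using hjn), norm_zero]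
      exact mul_nonneg (ha j) hK0

theorem tendsto_conv_div {u a b : ℕ → ℝ} {α β : ℝ}
    (hpos : ∀ n, 1 ≤ n → 0 < u n)
    (hshift : ∀ j, Tendsto (fun n => u (n - j) / u n) atTop (𝓝 1))
    (hdom : ∃ C, ∀ᶠ n in atTop, ∀ j, 2 * j ≤ n → u (n - j) ≤ C * u n)
    (ha : ∀ n, 0 ≤ a n) (hb : ∀ n, 0 ≤ b n) (ha0 : a 0 = 0) (hb0 : b 0 = 0)
    (hsa : Summable a) (hsb : Summable b)
    (hα : Tendsto (fun n => a n / u n) atTop (𝓝 α))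
    (hβ : Tendsto (fun n => b n / u n) atTop (𝓝 β)) :
    Tendsto (fun n => conv a b n / u n) atTop (𝓝 ((∑' j, a j) * β + (∑' j, b j) * α)) := by
  simp_rw [conv_eq_sum_add_sum, add_div, Finset.sum_div]
  refine .add (tendsto_sum_mul_div hpos hshift hdom ha ha0 hsa hβ ?_ fun j hj => ?_)
    (tendsto_sum_mul_div hpos hshift hdom hb hb0 hsb hα ?_ fun j hj => ?_)
  all_goals first
    | exact fun n j hj => by simp only [Finset.mem_filter] at hj; omega
    | filter_upwards [eventually_gt_atTop (2 * j)] with n hn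
      simp only [Finset.mem_filter, Finset.mem_Ico]
      omega

theorem tendsto_iterConv_div {u : ℕ → ℝ} (hpos : ∀ n, 1 ≤ n → 0 < u n) (hu0 : u 0 = 0)
    (hsum : Summable u)
    (hshift : ∀ j, Tendsto (fun n => u (n - j) / u n) atTop (𝓝 1))
    (hdom : ∃ C, ∀ᶠ n in atTop, ∀ j, 2 * j ≤ n → u (n - j) ≤ C * u n) (k : ℕ) :
    Tendsto (fun n => iterConv u k n / u n) atTop (𝓝 (k * (∑' n, u n) ^ (k - 1))) := by
  have hu := nonneg_of_zero_of_pos hu0 hpos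
  have hself : Tendsto (fun n => u n / u n) atTop (𝓝 1) :=
    tendsto_const_nhds.congr' <| by
      filter_upwards [eventually_ge_atTop 1] with n hn using (div_self (hpos n hn).ne').symm
  rcases Nat.eq_zero_or_pos k with rfl | hk
  · refine tendsto_const_nhds.congr' ?_
    filter_upwards [eventually_ge_atTop 1] with n hn
    simp [iterConv_zero_of_one_le u hn]
  induction k, hk using Nat.le_induction with
  | base => simpa [iterConv_one] using hself
  | succ k hk ih =>
    rw [iterConv_succ u hk]
    convert tendsto_conv_div hpos hshift hdom (iterConv_nonneg hu k) hu
      (iterConv_eq_zero_of_lt hu0 hk) hu0 (hasSum_iterConv hu hu0 hsum k).summable hsum ih hself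
      using 2
    rw [(hasSum_iterConv hu hu0 hsum k).tsum_eq]
    obtain ⟨k, rfl⟩ := Nat.exists_eq_add_of_le' hk
    push_cast
    ring

theorem exists_eventually_sum_tail_le {u : ℕ → ℝ} (hpos : ∀ n, 1 ≤ n → 0 < u n)
    (hu0 : u 0 = 0) (hsum : Summable u)
    (hshift : ∀ j, Tendsto (fun n => u (n - j) / u n) atTop (𝓝 1))
    (hconv : Tendsto (fun n => conv u u n / u n) atTop (𝓝 (2 * ∑' n, u n)))
    {r : ℝ} (hr : ∑' n, u n < r) :
    ∃ T, ∀ᶠ n in atTop, ∑ j ∈ Finset.Ico 1 n with T ≤ j, u j * u (n - j) ≤ r * u n := by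
  obtain ⟨T, hT⟩ : ∃ T, 2 * ∑' n, u n - r < ∑ j ∈ Finset.range T, u j :=
    (hsum.tendsto_sum_tsum_nat.eventually (lt_mem_nhds (by linarith))).exists
  have hhead : Tendsto (fun n => ∑ j ∈ Finset.range T, u j * u (n - j) / u n) atTop
      (𝓝 (∑ j ∈ Finset.range T, u j)) :=
    tendsto_finsetSum _ fun j _ => by
      simpa [mul_div_assoc] using (hshift j).const_mul (u j)
  refine ⟨T, ?_⟩
  filter_upwards [(hconv.sub hhead).eventually (gt_mem_nhds (show _ < r by linarith)),
    eventually_ge_atTop T, eventually_ge_atTop 1] with n hlt hTn hn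
  have hfirst : ∑ j ∈ Finset.Ico 1 n with ¬T ≤ j, u j * u (n - j)
      = ∑ j ∈ Finset.range T, u j * u (n - j) := by
    refine Finset.sum_subset (fun j hj => by simp at hj ⊢; omega) fun j hj hj' => ?_
    obtain rfl : j = 0 := by simp at hj hj'; omega
    rw [hu0, zero_mul]
  have hsplit : ∑ j ∈ Finset.Ico 1 n with T ≤ j, u j * u (n - j)
      = conv u u n - ∑ j ∈ Finset.range T, u j * u (n - j) := by
    rw [eq_sub_iff_add_eq, conv, ← Finset.sum_filter_not_add_sum_filter (Finset.Ico 1 n) (T ≤ ·),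
      hfirst, add_comm]
  rw [hsplit, ← div_le_iff₀ (hpos n hn), sub_div, Finset.sum_div]
  exact hlt.le

theorem conv_le_of_head_tail {a u : ℕ → ℝ} {n T : ℕ} {A K c r : ℝ} (ha : ∀ j, 0 ≤ a j)
    (hu : ∀ j, 0 ≤ u j) (hA : ∀ s : Finset ℕ, ∑ j ∈ s, a j ≤ A) (hK : 0 ≤ K) (hc : 0 ≤ c)
    (hac : ∀ j, 1 ≤ j → a j ≤ c * u j) (hhead : ∀ j < T, u (n - j) ≤ K * u n)
    (htail : ∑ j ∈ Finset.Ico 1 n with T ≤ j, u j * u (n - j) ≤ r * u n) :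
    conv a u n ≤ (K * A + c * r) * u n := by
  rw [conv, ← Finset.sum_filter_not_add_sum_filter _ (T ≤ ·)]
  have hfirst : ∑ j ∈ Finset.Ico 1 n with ¬T ≤ j, a j * u (n - j) ≤ K * A * u n :=
    calc ∑ j ∈ Finset.Ico 1 n with ¬T ≤ j, a j * u (n - j)
        ≤ ∑ j ∈ Finset.Ico 1 n with ¬T ≤ j, a j * (K * u n) :=
          Finset.sum_le_sum fun j hj =>
            mul_le_mul_of_nonneg_left (hhead j (by simp at hj; omega)) (ha j)
      _ ≤ A * (K * u n) := by
          rw [← Finset.sum_mul]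
          exact mul_le_mul_of_nonneg_right (hA _) (mul_nonneg hK (hu n))
      _ = K * A * u n := by ring
  have hsecond : ∑ j ∈ Finset.Ico 1 n with T ≤ j, a j * u (n - j) ≤ c * r * u n :=
    calc ∑ j ∈ Finset.Ico 1 n with T ≤ j, a j * u (n - j)
        ≤ ∑ j ∈ Finset.Ico 1 n with T ≤ j, c * (u j * u (n - j)) :=
          Finset.sum_le_sum fun j hj => by
            rw [← mul_assoc]
            exact mul_le_mul_of_nonneg_right (hac j (by simp at hj; omega)) (hu _)
      _ ≤ c * (r * u n) := by
          rw [← Finset.mul_sum]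
          exact mul_le_mul_of_nonneg_left htail hc
      _ = c * r * u n := by ring
  linarith

theorem iterConv_le_of_head_tail {u : ℕ → ℝ} (hpos : ∀ n, 1 ≤ n → 0 < u n) (hu0 : u 0 = 0)
    (hsum : Summable u) {r B : ℝ} {N T : ℕ} (hr : ∑' n, u n < r) (hBr : 2 ≤ B * r)
    (hBu : ∀ m, 1 ≤ m → m < N → 1 ≤ B * u m)
    (hN : ∀ n, N ≤ n → ∑ j ∈ Finset.Ico 1 n with T ≤ j, u j * u (n - j) ≤ r * u n ∧
      ∀ j < T, u (n - j) ≤ 2 * u n) (k n : ℕ) (hn : 1 ≤ n) :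
    iterConv u k n ≤ B * k * r ^ k * u n := by
  have hu := nonneg_of_zero_of_pos hu0 hpos
  have hr0 : 0 < r := (tsum_nonneg hu).trans_lt hr
  have hB0 : 0 ≤ B := by nlinarith
  have hUr (i : ℕ) : (∑' n, u n) ^ i ≤ r ^ i := pow_le_pow_left₀ (tsum_nonneg hu) hr.le i
  induction k generalizing n with
  | zero => simp [iterConv_zero_of_one_le u hn]
  | succ k ih =>
    rcases Nat.eq_zero_or_pos k with rfl | hk
    · simp only [zero_add, iterConv_one, Nat.cast_one, mul_one, pow_one]
      nlinarith [hpos n hn]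
    push_cast
    rcases lt_or_ge n N with hnN | hnN
    · have hk1 : (1 : ℝ) ≤ k + 1 := le_add_of_nonneg_left k.cast_nonneg
      calc iterConv u (k + 1) n ≤ r ^ (k + 1) := (iterConv_le_pow hu hu0 hsum _ n).trans (hUr _)
        _ ≤ B * u n * r ^ (k + 1) :=
          le_mul_of_one_le_left (pow_pos hr0 _).le (hBu n hn hnN)
        _ ≤ (k + 1) * (B * u n * r ^ (k + 1)) :=
          le_mul_of_one_le_left (mul_nonneg (mul_nonneg hB0 (hu n)) (pow_pos hr0 _).le) hk1
        _ = B * (k + 1) * r ^ (k + 1) * u n := by ring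
    · rw [iterConv_succ u hk]
      refine (conv_le_of_head_tail (iterConv_nonneg hu k) hu
        (fun s => sum_le_hasSum s (fun i _ => iterConv_nonneg hu k i)
          (hasSum_iterConv hu hu0 hsum k))
        two_pos.le (by positivity) ih (hN n hnN).2 (hN n hnN).1).trans
        (mul_le_mul_of_nonneg_right ?_ (hu n))
      rw [pow_succ]
      nlinarith [mul_le_mul_of_nonneg_right hBr (pow_pos hr0 k).le, hUr k]

theorem exists_iterConv_le {u : ℕ → ℝ} (hpos : ∀ n, 1 ≤ n → 0 < u n) (hu0 : u 0 = 0)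
    (hsum : Summable u) (hshift : ∀ j, Tendsto (fun n => u (n - j) / u n) atTop (𝓝 1))
    (hconv : Tendsto (fun n => conv u u n / u n) atTop (𝓝 (2 * ∑' n, u n)))
    {r : ℝ} (hr : ∑' n, u n < r) :
    ∃ B, ∀ k n, 1 ≤ n → iterConv u k n ≤ B * k * r ^ k * u n := by
  have hr0 : 0 < r := (tsum_nonneg (nonneg_of_zero_of_pos hu0 hpos)).trans_lt hr
  obtain ⟨T, hT⟩ := exists_eventually_sum_tail_le hpos hu0 hsum hshift hconv hr
  have hhead : ∀ᶠ n in atTop, ∀ j < T, u (n - j) ≤ 2 * u n := by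
    refine (eventually_all_finite (Set.finite_lt_nat T)).2 fun j _ => ?_
    filter_upwards [(hshift j).eventually (gt_mem_nhds one_lt_two), eventually_ge_atTop 1]
      with n hn hn1
    exact ((div_lt_iff₀ (hpos n hn1)).1 hn).le
  obtain ⟨N, hN⟩ := eventually_atTop.1 (hT.and hhead)
  obtain ⟨B, hB⟩ := Finset.exists_le (insert (2 / r) ((Finset.Ico 1 N).image fun m => (u m)⁻¹))
  refine ⟨B, iterConv_le_of_head_tail hpos hu0 hsum hr
    ((div_le_iff₀ hr0).1 (hB _ (Finset.mem_insert_self _ _))) (fun m hm hmN => ?_) hN⟩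
  exact (inv_le_iff_one_le_mul₀ (hpos m hm)).1 <| hB _ <| Finset.mem_insert_of_mem <|
    Finset.mem_image_of_mem _ (Finset.mem_Ico.2 ⟨hm, hmN⟩)

theorem hasSum_neg_one_pow_mul_pow_pred {x : ℝ} (hx : |x| < 1) :
    HasSum (fun k : ℕ => (-1) ^ (k + 1) * (k * x ^ (k - 1))) (1 / (1 + x) ^ 2) := by
  have hnorm : ‖-x‖ < 1 := by rwa [norm_neg, Real.norm_eq_abs]
  have hx1 : 1 + x ≠ 0 := by linarith [neg_abs_le x]
  have hgeom := (hasSum_coe_mul_geometric_of_norm_lt_one hnorm).add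
    (hasSum_geometric_of_norm_lt_one hnorm)
  have hterm : (fun k : ℕ => (-1 : ℝ) ^ (k + 1 + 1) * ((k + 1 : ℕ) * x ^ (k + 1 - 1)))
      = fun k : ℕ => k * (-x) ^ k + (-x) ^ k := by
    ext k
    rw [Nat.add_sub_cancel, neg_pow x, pow_succ, pow_succ]
    push_cast
    ring
  have hval : 1 / (1 + x) ^ 2 - ∑ k ∈ Finset.range 1, (-1 : ℝ) ^ (k + 1) * (k * x ^ (k - 1))
      = -x / (1 - -x) ^ 2 + (1 - -x)⁻¹ := by
    simp only [Finset.range_one, Finset.sum_singleton, CharP.cast_eq_zero, zero_mul, mul_zero,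
      sub_zero, sub_neg_eq_add]
    field_simp
    ring
  rw [← hasSum_nat_add_iff' 1, hterm, hval]
  exact hgeom

theorem tsum_mul_iterConv {u : ℕ → ℝ} (hu0 : u 0 = 0) (c : ℕ → ℝ) {n : ℕ} (hn : 1 ≤ n) :
    ∑' k, c k * iterConv u k n = ∑ k ∈ Finset.Icc 1 n, c k * iterConv u k n := by
  refine tsum_eq_sum fun k hk => ?_
  rcases Nat.eq_zero_or_pos k with rfl | hk0
  · rw [iterConv_zero_of_one_le u hn, mul_zero]
  · rw [iterConv_eq_zero_of_lt hu0 (by simp at hk; omega), mul_zero]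

theorem tendsto_tsum_neg_one_pow_mul_iterConv_div {u : ℕ → ℝ} (hpos : ∀ n, 1 ≤ n → 0 < u n)
    (hu0 : u 0 = 0) (hsum : Summable u)
    (hshift : ∀ j, Tendsto (fun n => u (n - j) / u n) atTop (𝓝 1))
    (hdom : ∃ C, ∀ᶠ n in atTop, ∀ j, 2 * j ≤ n → u (n - j) ≤ C * u n) (hlt : ∑' n, u n < 1) :
    Tendsto (fun n => ∑' k, (-1 : ℝ) ^ (k + 1) * (iterConv u k n / u n)) atTop
      (𝓝 (1 / (1 + ∑' n, u n) ^ 2)) := by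
  have hu := nonneg_of_zero_of_pos hu0 hpos
  have hU : 0 ≤ ∑' n, u n := tsum_nonneg hu
  have hlim := tendsto_iterConv_div hpos hu0 hsum hshift hdom
  have hconv : Tendsto (fun n => conv u u n / u n) atTop (𝓝 (2 * ∑' n, u n)) := by
    simpa [iterConv_succ u le_rfl, iterConv_one, two_mul] using hlim 2
  obtain ⟨B, hB⟩ := exists_iterConv_le hpos hu0 hsum hshift hconv
    (show ∑' n, u n < (1 + ∑' n, u n) / 2 by linarith)
  have hr : ‖(1 + ∑' n, u n) / 2‖ < 1 := by rw [Real.norm_of_nonneg (by positivity)]; linarith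
  rw [← (hasSum_neg_one_pow_mul_pow_pred (by rwa [abs_of_nonneg hU])).tsum_eq]
  refine tendsto_tsum_of_dominated_convergence
    ((hasSum_coe_mul_geometric_of_norm_lt_one hr).summable.mul_left B)
    (fun k => (hlim k).const_mul _) ?_
  filter_upwards [eventually_ge_atTop 1] with n hn k
  rw [norm_mul, norm_pow, norm_neg, norm_one, one_pow, one_mul,
    Real.norm_of_nonneg (div_nonneg (iterConv_nonneg hu k n) (hpos n hn).le),
    div_le_iff₀ (hpos n hn), ← mul_assoc]
  exact hB k n hn

theorem stmt6_general (u : ℕ → ℝ) (hu0 : u 0 = 0) (hupos : ∀ n, 1 ≤ n → 0 < u n)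
    (γ : ℝ) (hrv : RegVar u (-γ))
    (husum : Summable u) (hult : (∑' n, u n) < 1)
    (p : ℕ → ℝ)
    (hp : ∀ n, p n = ∑ k ∈ Finset.Icc 1 n, (-1 : ℝ) ^ (k + 1) * iterConv u k n) :
    Filter.Tendsto (fun n => p n / u n) Filter.atTop
      (nhds (1 / (1 + ∑' n, u n) ^ 2)) := by
  refine (tendsto_tsum_neg_one_pow_mul_iterConv_div hupos hu0 husum (hrv.tendsto_sub_div hupos)
    (hrv.exists_eventually_sub_le_mul hupos) hult).congr' ?_
  filter_upwards [eventually_ge_atTop 1] with n hn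
  rw [hp, ← tsum_mul_iterConv hu0 _ hn, ← tsum_div_const]
  simp_rw [mul_div_assoc]

/-- under the conditions of Statement 5, with
`p_n := ∑_{k=1}^n (-1)^{k+1} u_n^{*(k)}`, one has
`p_n / u_n → 1/(1+u)²` as `n → ∞`. -/
theorem stmt6 (u : ℕ → ℝ) (hu0 : u 0 = 0) (hupos : ∀ n, 1 ≤ n → 0 < u n)
    (γ : ℝ) (hγ : 1 < γ) (hrv : RegVar u (-γ))
    (husum : Summable u) (hult : (∑' n, u n) < 1)
    (p : ℕ → ℝ)
    (hp : ∀ n, p n = ∑ k ∈ Finset.Icc 1 n, (-1 : ℝ) ^ (k + 1) * iterConv u k n) :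
    Filter.Tendsto (fun n => p n / u n) Filter.atTop
      (nhds (1 / (1 + ∑' n, u n) ^ 2)) :=
  stmt6_general u hu0 hupos γ hrv husum hult p hp
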